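/- arXiv:1802.04331 — 4 statements merged into one kernel-verified Lean document; each statement's English description precedes it below -/
import Mathlib

section
/- Let (X,d) be a compact metric space and A ⊆ X a nonempty finite subset. The nearby map q_A : X → 2^A_u sending x to A(x) is continuous, where 2^A_u is the hyperspace of nonempty subsets of A with the upper semifinite topology. -/
open TopologicalSpace

/-- The hyperspace of nonempty closed subsets of `X`. -/
abbrev Hyper (X : Type*) [TopologicalSpace X] := {C : Set X // C.Nonempty ∧ IsClosed C}

/-- The upper semifinite topology, with basic open sets `B(U) = {C | C ⊆ U}` for `U` open. -/
instance hyperTop (X : Type*) [TopologicalSpace X] : TopologicalSpace (Hyper X) :=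
  generateFrom {S | ∃ U : Set X, IsOpen U ∧ S = {C : Hyper X | C.1 ⊆ U}}

/-- The nearby map `q_A : X → 2^A_u`, sending `x` to the set of points of `A` at minimal
distance from `x`, is continuous. -/
theorem stmt1 {X : Type*} [MetricSpace X] [CompactSpace X]
    (A : Set X) (hfin : A.Finite) (hne : A.Nonempty) :
    ∃ q : X → Hyper (↥A),
      (∀ x : X, (q x).1 = {a : ↥A | dist x (a : X) = Metric.infDist x A}) ∧
      Continuous q := by
  classical
  haveI : Finite ↥A := hfin
  have hnonempty : ∀ x : X, {a : ↥A | dist x (a : X) = Metric.infDist x A}.Nonempty := by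
    intro x
    obtain ⟨a, ha, h⟩ := (hfin.isCompact).exists_infDist_eq_dist hne x
    exact ⟨⟨a, ha⟩, h.symm⟩
  refine ⟨fun x => ⟨{a : ↥A | dist x (a : X) = Metric.infDist x A}, hnonempty x,
      (Set.toFinite _).isClosed⟩, fun _ => rfl, ?_⟩
  apply continuous_generateFrom_iff.mpr
  rintro S ⟨U, hU, rfl⟩
  have : (fun x => (⟨{a : ↥A | dist x (a : X) = Metric.infDist x A}, hnonempty x,
      (Set.toFinite _).isClosed⟩ : Hyper ↥A)) ⁻¹' {C : Hyper ↥A | C.1 ⊆ U} =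
      ⋂ (a : ↥A) (_ : a ∉ U), {x : X | Metric.infDist x A < dist x (a : X)} := by
    ext x
    simp only [Set.mem_preimage, Set.mem_setOf_eq, Set.mem_iInter]
    constructor
    · intro h a haU
      have hle : Metric.infDist x A ≤ dist x (a : X) := Metric.infDist_le_dist_of_mem a.2
      rcases lt_or_eq_of_le hle with hlt | heq
      · exact hlt
      · exact absurd (h heq.symm) haU
    · intro h a ha
      by_contra haU
      simp only [Set.mem_setOf_eq] at ha; exact (ne_of_gt (h a haU)) ha
  rw [this]
  exact isOpen_iInter_of_finite fun a => isOpen_iInter_of_finite fun _ =>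
    isOpen_lt (Metric.continuous_infDist_pt A) (continuous_id.dist continuous_const)
end

section
/- Let (X,d) be a compact metric space. The family {U_ε}_{ε>0}, where U_ε = {C ∈ 2^X : diam(C) < ε}, is a neighborhood basis of the canonical copy φ(X) = {{x} : x ∈ X} in the hyperspace 2^X with the upper semifinite topology; that is, each U_ε is an open set containing φ(X), and every open set containing φ(X) contains some U_ε. -/
open TopologicalSpace

lemma hyper_basis {X : Type*} [TopologicalSpace X] {V : Set (Hyper X)} (hV : IsOpen V) :
    ∀ C ∈ V, ∃ U : Set X, IsOpen U ∧ C.1 ⊆ U ∧ ∀ C' : Hyper X, C'.1 ⊆ U → C' ∈ V := by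
  induction hV with
  | basic S hS =>
    obtain ⟨U, hU, rfl⟩ := hS
    exact fun C hC => ⟨U, hU, hC, fun C' h => h⟩
  | univ => exact fun C _ => ⟨Set.univ, isOpen_univ, Set.subset_univ _, fun _ _ => trivial⟩
  | inter S T _ _ ihS ihT =>
    rintro C ⟨hCS, hCT⟩
    obtain ⟨U, hU, hCU, hUS⟩ := ihS C hCS
    obtain ⟨W, hW, hCW, hWT⟩ := ihT C hCT
    exact ⟨U ∩ W, hU.inter hW, Set.subset_inter hCU hCW,
      fun C' h => ⟨hUS C' (h.trans Set.inter_subset_left),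
        hWT C' (h.trans Set.inter_subset_right)⟩⟩
  | sUnion 𝒮 _ ih =>
    rintro C ⟨S, hS, hCS⟩
    obtain ⟨U, hU, hCU, hUS⟩ := ih S hS C hCS
    exact ⟨U, hU, hCU, fun C' h => ⟨S, hS, hUS C' h⟩⟩

/-- For a compact metric space `X`, the sets `U_ε = {C : diam C < ε}` form a neighborhood
basis of the canonical copy of `X` (the set of singletons) in `2^X_u`. -/
theorem stmt7 {X : Type*} [MetricSpace X] [CompactSpace X] [T1Space X] :
    (∀ ε : ℝ, 0 < ε →
      IsOpen {C : Hyper X | Metric.diam C.1 < ε} ∧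
      ∀ x : X, (⟨{x}, Set.singleton_nonempty x, isClosed_singleton⟩ : Hyper X) ∈
        {C : Hyper X | Metric.diam C.1 < ε}) ∧
    ∀ V : Set (Hyper X), IsOpen V →
      (∀ x : X, (⟨{x}, Set.singleton_nonempty x, isClosed_singleton⟩ : Hyper X) ∈ V) →
      ∃ ε > (0 : ℝ), {C : Hyper X | Metric.diam C.1 < ε} ⊆ V := by
  constructor
  · intro ε hε
    constructor
    · -- express as union of basic open sets
      have : {C : Hyper X | Metric.diam C.1 < ε} =
          ⋃ U ∈ {U : Set X | IsOpen U ∧ Metric.diam U < ε}, {C : Hyper X | C.1 ⊆ U} := by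
        ext C
        simp only [Set.mem_setOf_eq, Set.mem_iUnion]
        constructor
        · intro hC
          set r := (ε - Metric.diam C.1) / 3 with hr
          have hr0 : 0 < r := by rw [hr]; linarith
          refine ⟨Metric.thickening r C.1, ⟨Metric.isOpen_thickening, ?_⟩,
            Metric.self_subset_thickening hr0 _⟩
          calc Metric.diam (Metric.thickening r C.1) ≤ Metric.diam C.1 + 2 * r :=
                Metric.diam_thickening_le _ hr0.le
            _ < ε := by rw [hr]; linarith
        · rintro ⟨U, ⟨_, hUd⟩, hCU⟩
          exact lt_of_le_of_lt (Metric.diam_mono hCU (Metric.isBounded_of_compactSpace)) hUd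
      rw [this]
      exact isOpen_biUnion fun U hU =>
        isOpen_generateFrom_of_mem ⟨U, hU.1, rfl⟩
    · intro x
      simpa using hε
  · intro V hV hsing
    -- choose for each x an open U x with ball-property
    have h := fun x => hyper_basis hV _ (hsing x)
    choose U hUopen hxU hUV using h
    have hcover : (Set.univ : Set X) ⊆ ⋃ x, U x := fun x _ =>
      Set.mem_iUnion.2 ⟨x, hxU x (Set.mem_singleton x)⟩
    obtain ⟨δ, hδ0, hδ⟩ := lebesgue_number_lemma_of_metric isCompact_univ hUopen hcover
    refine ⟨δ, hδ0, fun C hC => ?_⟩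
    obtain ⟨a, ha⟩ := C.2.1
    obtain ⟨i, hi⟩ := hδ a trivial
    refine hUV i C (fun y hy => hi ?_)
    exact lt_of_le_of_lt (Metric.dist_le_diam_of_mem Metric.isBounded_of_compactSpace hy ha) hC
end

section
/- Let X and Y be compact metric spaces and f : X → 2^Y_u a continuous map into the hyperspace of Y with the upper semifinite topology. Then the extension F : 2^X_u → 2^Y_u defined by F(C) = ⋃_{x ∈ C} f(x) is well defined (F(C) is a nonempty closed subset of Y) and continuous. -/
open TopologicalSpace

/-- For compact metric spaces `X, Y` and a continuous `f : X → 2^Y_u`, the extension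
`F(C) = ⋃_{x ∈ C} f(x)` is well defined (its values are nonempty closed subsets of `Y`)
and continuous. -/
theorem stmt8 {X Y : Type*} [MetricSpace X] [CompactSpace X] [MetricSpace Y] [CompactSpace Y]
    (f : X → Hyper Y) (hf : Continuous f) :
    ∃ F : Hyper X → Hyper Y,
      (∀ C : Hyper X, (F C).1 = ⋃ x ∈ C.1, (f x).1) ∧ Continuous F := by
  classical
  have hopen : ∀ U : Set Y, IsOpen U → IsOpen {D : Hyper Y | D.1 ⊆ U} := fun U hU =>
    TopologicalSpace.GenerateOpen.basic _ ⟨U, hU, rfl⟩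
  have hwf : ∀ C : Hyper X, (⋃ x ∈ C.1, (f x).1).Nonempty ∧ IsClosed (⋃ x ∈ C.1, (f x).1) := by
    intro C
    constructor
    · obtain ⟨x, hx⟩ := C.2.1
      obtain ⟨y, hy⟩ := (f x).2.1
      exact ⟨y, Set.mem_biUnion hx hy⟩
    · have hcomp : IsCompact (⋃ x ∈ C.1, (f x).1) := by
        apply isCompact_of_finite_subcover
        intro ι U hU hcov
        have hC : IsCompact C.1 := C.2.2.isCompact
        have hfx : ∀ x ∈ C.1, ∃ t : Finset ι, (f x).1 ⊆ ⋃ i ∈ t, U i := by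
          intro x hx
          exact ((f x).2.2.isCompact).elim_finite_subcover U hU
            ((Set.subset_biUnion_of_mem hx).trans hcov)
        choose t ht using hfx
        have hV : ∀ (x) (hx : x ∈ C.1),
            {x' : X | (f x').1 ⊆ ⋃ i ∈ t x hx, U i} ∈ nhds x := by
          intro x hx
          refine IsOpen.mem_nhds ?_ (ht x hx)
          exact (hopen _ (isOpen_biUnion fun i _ => hU i)).preimage hf
        obtain ⟨s, hs⟩ := hC.elim_nhds_subcover' _ hV
        refine ⟨s.biUnion fun x => t x.1 x.2, ?_⟩
        intro y hy
        obtain ⟨x, hx, hyx⟩ := Set.mem_iUnion₂.1 hy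
        obtain ⟨x₀, hx₀⟩ := Set.mem_iUnion₂.1 (hs hx)
        obtain ⟨hx₀s, hxV⟩ := hx₀
        obtain ⟨i, hi, hyi⟩ := Set.mem_iUnion₂.1 (hxV hyx)
        exact Set.mem_iUnion₂.2 ⟨i, Finset.mem_biUnion.2 ⟨x₀, hx₀s, hi⟩, hyi⟩
      exact hcomp.isClosed
  refine ⟨fun C => ⟨_, hwf C⟩, fun C => rfl, ?_⟩
  rw [continuous_generateFrom_iff]
  rintro s ⟨U, hU, rfl⟩
  have : (fun C : Hyper X => (⟨_, hwf C⟩ : Hyper Y)) ⁻¹' {D : Hyper Y | D.1 ⊆ U}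
      = {C : Hyper X | C.1 ⊆ {x : X | (f x).1 ⊆ U}} := by
    ext C
    simp only [Set.mem_preimage, Set.mem_setOf_eq, Set.iUnion₂_subset_iff]
    exact Iff.rfl
  rw [this]
  exact TopologicalSpace.GenerateOpen.basic _
    ⟨{x : X | (f x).1 ⊆ U}, (hopen U hU).preimage hf, rfl⟩
end

section
/- Let X be a topological space, μ_X : X → X_H its Hausdorff (T2) reflection, and I = [0,1]. Then the Hausdorff reflection of X × I is homeomorphic to X_H × I, via the map induced by μ_X × id. -/
open unitInterval

/-- The Hausdorff reflection of `X × [0,1]` is homeomorphic to `X_H × [0,1]`, via the map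
induced by `μ_X × id`. Hausdorff reflections are given by their universal property. -/
theorem stmt17 {X XH XIH : Type} [TopologicalSpace X] [TopologicalSpace XH]
    [TopologicalSpace XIH] [T2Space XH] [T2Space XIH]
    (μX : X → XH) (hμX : Continuous μX) (hqX : Topology.IsQuotientMap μX)
    (huX : ∀ (Z : Type) [TopologicalSpace Z] [T2Space Z] (f : X → Z), Continuous f →
      ∃! g : XH → Z, Continuous g ∧ g ∘ μX = f)
    (μXI : X × I → XIH) (hμXI : Continuous μXI) (hqXI : Topology.IsQuotientMap μXI)
    (huXI : ∀ (Z : Type) [TopologicalSpace Z] [T2Space Z] (f : X × I → Z), Continuous f →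
      ∃! g : XIH → Z, Continuous g ∧ g ∘ μXI = f) :
    ∃ e : XIH ≃ₜ XH × I, ∀ p : X × I, e (μXI p) = (μX p.1, p.2) := by
  -- the forward map, from the universal property of XIH
  obtain ⟨g, ⟨hgc, hg⟩, -⟩ := huXI (XH × I) (fun p => (μX p.1, p.2))
    ((hμX.comp continuous_fst).prodMk continuous_snd)
  -- key: μXI only depends on μX in the first coordinate
  have key : ∀ (x x' : X) (t : I), μX x = μX x' → μXI (x, t) = μXI (x', t) := by
    intro x x' t hxx'
    obtain ⟨k, ⟨hkc, hk⟩, -⟩ := huX XIH (fun x => μXI (x, t))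
      (hμXI.comp (continuous_id.prodMk continuous_const))
    calc μXI (x, t) = k (μX x) := (congrFun hk x).symm
    _ = k (μX x') := by rw [hxx']
    _ = μXI (x', t) := congrFun hk x'
  -- the inverse map
  set h : XH × I → XIH := fun p => μXI (Function.surjInv hqX.surjective p.1, p.2) with hh
  have hcomp : ∀ p : X × I, h (μX p.1, p.2) = μXI p := by
    rintro ⟨x, t⟩
    exact key _ _ t (Function.surjInv_eq hqX.surjective (μX x))
  have hhc : Continuous h := by
    apply hqX.continuous_lift_prod_left (Y := I)
    have : (fun p : X × I => h (μX p.1, p.2)) = μXI := funext hcomp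
    rw [this]; exact hμXI
  -- h ∘ g = id
  have hg' : ∀ p : X × I, g (μXI p) = (μX p.1, p.2) := fun p => congrFun hg p
  have hleft : ∀ z : XIH, h (g z) = z := by
    obtain ⟨k, -, huniq⟩ := huXI XIH μXI hμXI
    have h1 : h ∘ g = k := huniq _ ⟨hhc.comp hgc, by
      funext p; simp only [Function.comp_apply, hg' p, hcomp p]⟩
    have h2 : id = k := huniq _ ⟨continuous_id, by funext p; rfl⟩
    intro z
    calc h (g z) = k z := congrFun h1 z
    _ = z := (congrFun h2 z).symm
  have hright : ∀ p : XH × I, g (h p) = p := by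
    rintro ⟨y, t⟩
    obtain ⟨x, rfl⟩ := hqX.surjective y
    rw [show h (μX x, t) = μXI (x, t) from hcomp (x, t), hg' (x, t)]
  exact ⟨⟨⟨g, h, hleft, hright⟩, hgc, hhc⟩, hg'⟩
end
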